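/- arXiv:2112.15267 — 5 statements merged into one kernel-verified Lean document; each statement's English description precedes it below -/
import Mathlib

section
/- Let A, B, β, δ ∈ ℂ with A ≠ B, A + 2B ≠ 0, and β²(A − 2B) + 4δ(A − B)² = 0. Then the function u(z) = β z/(2(A − B)) − 6/(z(A + 2B)) satisfies u''' − B u u'' − A (u')² + β u' + δ = 0 for all z ≠ 0. -/
theorem stmt1 (A B β δ : ℂ) (hAB : A ≠ B) (hA2B : A + 2 * B ≠ 0)
    (hrel : β ^ 2 * (A - 2 * B) + 4 * δ * (A - B) ^ 2 = 0)
    (u : ℂ → ℂ) (hu : ∀ z, u z = β * z / (2 * (A - B)) - 6 / (z * (A + 2 * B))) :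
    ∀ z : ℂ, z ≠ 0 →
      deriv (deriv (deriv u)) z - B * u z * deriv (deriv u) z - A * (deriv u z) ^ 2
        + β * deriv u z + δ = 0 := by
  have hABne : A - B ≠ 0 := sub_ne_zero.mpr hAB
  set c1 : ℂ := β / (2 * (A - B)) with hc1
  set c2 : ℂ := 6 / (A + 2 * B) with hc2
  have he1 : 2 * c1 * (A - B) = β := by rw [hc1]; field_simp
  have he2 : c2 * (A + 2 * B) = 6 := by rw [hc2]; field_simp
  have hconst : c1 ^ 2 * (A - 2 * B) + δ = 0 := by
    rw [hc1]
    have h4 : (2 * (A - B)) ^ 2 ≠ 0 := pow_ne_zero _ (by simp [hABne])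
    rw [div_pow]
    rw [div_mul_eq_mul_div, div_add' _ _ _ h4, div_eq_zero_iff]
    left
    linear_combination hrel
  have hueq : ∀ w : ℂ, w ≠ 0 → u w = c1 * w - c2 * w⁻¹ := by
    intro w hw
    rw [hu, hc1, hc2]
    field_simp
  have h1 : ∀ w : ℂ, w ≠ 0 → HasDerivAt u (c1 + c2 * (w⁻¹) ^ 2) w := by
    intro w hw
    have hg : HasDerivAt (fun x : ℂ => c1 * x - c2 * x⁻¹)
        (c1 * 1 - c2 * (-(w ^ 2)⁻¹)) w :=
      ((hasDerivAt_id w).const_mul c1).sub ((hasDerivAt_inv hw).const_mul c2)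
    have heq : u =ᶠ[nhds w] fun x : ℂ => c1 * x - c2 * x⁻¹ := by
      filter_upwards [isOpen_compl_singleton.mem_nhds (by simpa using hw)] with x hx
      exact hueq x hx
    have := hg.congr_of_eventuallyEq heq
    refine this.congr_deriv ?_
    rw [inv_pow]
    ring
  have hd1 : ∀ w : ℂ, w ≠ 0 → deriv u w = c1 + c2 * (w⁻¹) ^ 2 := fun w hw => (h1 w hw).deriv
  have h2 : ∀ w : ℂ, w ≠ 0 → HasDerivAt (deriv u) (-2 * c2 * (w⁻¹) ^ 3) w := by
    intro w hw
    have hg : HasDerivAt (fun x : ℂ => c1 + c2 * (x⁻¹) ^ 2)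
        (c2 * ((2 : ℕ) * (w⁻¹) ^ (2 - 1) * (-(w ^ 2)⁻¹))) w :=
      (((hasDerivAt_inv hw).pow 2).const_mul c2).const_add c1
    have heq : deriv u =ᶠ[nhds w] fun x : ℂ => c1 + c2 * (x⁻¹) ^ 2 := by
      filter_upwards [isOpen_compl_singleton.mem_nhds (by simpa using hw)] with x hx
      exact hd1 x hx
    have := hg.congr_of_eventuallyEq heq
    refine this.congr_deriv ?_
    push_cast
    field_simp
  have hd2 : ∀ w : ℂ, w ≠ 0 → deriv (deriv u) w = -2 * c2 * (w⁻¹) ^ 3 :=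
    fun w hw => (h2 w hw).deriv
  have h3 : ∀ w : ℂ, w ≠ 0 → HasDerivAt (deriv (deriv u)) (6 * c2 * (w⁻¹) ^ 4) w := by
    intro w hw
    have hg : HasDerivAt (fun x : ℂ => -2 * c2 * (x⁻¹) ^ 3)
        ((-2 * c2) * ((3 : ℕ) * (w⁻¹) ^ (3 - 1) * (-(w ^ 2)⁻¹))) w :=
      ((hasDerivAt_inv hw).pow 3).const_mul (-2 * c2)
    have heq : deriv (deriv u) =ᶠ[nhds w] fun x : ℂ => -2 * c2 * (x⁻¹) ^ 3 := by
      filter_upwards [isOpen_compl_singleton.mem_nhds (by simpa using hw)] with x hx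
      exact hd2 x hx
    have := hg.congr_of_eventuallyEq heq
    refine this.congr_deriv ?_
    push_cast
    field_simp
    ring
  intro z hz
  have hd3 : deriv (deriv (deriv u)) z = 6 * c2 * (z⁻¹) ^ 4 := (h3 z hz).deriv
  rw [hd3, hd2 z hz, hd1 z hz, hueq z hz]
  have he3 : z * z⁻¹ = 1 := mul_inv_cancel₀ hz
  linear_combination (2 * B * c1 * c2 * (z⁻¹) ^ 2) * he3 - (c2 * (z⁻¹) ^ 4) * he2
    + (-c1 - c2 * (z⁻¹) ^ 2) * he1 + hconst
end

section
/- Let A, B, γ, δ, b ∈ ℂ with A ≠ 0, 2A + B ≠ 0, γ ≠ 0. Set a = γ/(2(2A + B)) and c = (2A + B)(A b² − δ)/(2 A γ). Then the quadratic polynomial u(z) = a z² + b z + c satisfies u''' − B u u'' − A (u')² + γ u + δ = 0 for all z ∈ ℂ. -/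
/-! A quadratic has constant second derivative `2a` and vanishing third derivative, so the
equation reduces to a polynomial identity in `z`. Its `z²`- and `z`-coefficients cancel exactly
when `γ - 2aB = 4Aa`, which fixes `a`; the constant term then vanishes exactly when
`4Aac = Ab² - δ`, which fixes `c`. -/

section QuadraticDeriv

variable {𝕜 : Type*} [NontriviallyNormedField 𝕜] (a b c : 𝕜)

theorem deriv_affine : deriv (fun z => a * z + b) = fun _ => a := by
  funext z
  simp

theorem deriv_quadratic : deriv (fun z => a * z ^ 2 + b * z + c) = fun z => 2 * a * z + b := by
  funext z
  have h : HasDerivAt (fun z => a * z ^ 2 + b * z + c) (a * (2 * z) + b) z := by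
    simpa using (((hasDerivAt_pow 2 z).const_mul a).add ((hasDerivAt_id z).const_mul b)).add_const c
  rw [h.deriv]
  ring

end QuadraticDeriv

theorem stmt3 (A B γ δ b : ℂ) (hA : A ≠ 0) (h2AB : 2 * A + B ≠ 0) (hγ : γ ≠ 0)
    (a c : ℂ) (ha : a = γ / (2 * (2 * A + B)))
    (hc : c = (2 * A + B) * (A * b ^ 2 - δ) / (2 * A * γ))
    (u : ℂ → ℂ) (hu : ∀ z, u z = a * z ^ 2 + b * z + c) :
    ∀ z : ℂ,
      deriv (deriv (deriv u)) z - B * u z * deriv (deriv u) z - A * (deriv u z) ^ 2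
        + γ * u z + δ = 0 := by
  obtain rfl : u = fun z => a * z ^ 2 + b * z + c := funext hu
  have hlin : γ - 2 * a * B = 4 * A * a := by
    rw [ha]
    field_simp
    ring
  have hconst : 4 * A * a * c = A * b ^ 2 - δ := by
    rw [ha, hc, mul_assoc, div_mul_div_comm, mul_div_assoc', div_eq_iff (by simp [hA, h2AB, hγ])]
    ring
  intro z
  rw [deriv_quadratic, deriv_affine, deriv_const']
  linear_combination (a * z ^ 2 + b * z + c) * hlin + hconst
end

section
/- Let A ∈ ℂ, A ≠ 0, k₀ ∈ ℂ, k ∈ ℂ with k² = A k₀ / 2, and suppose δ = k₁ = 0, β = γ = 0. Then u(z) = (2k/A) tan(k z) satisfies u''' − A u u'' − A(u')² = 0 at every z where cos(kz) ≠ 0. -/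
theorem stmt10 (A k₀ k : ℂ) (hA : A ≠ 0) (hk : k ^ 2 = A * k₀ / 2)
    (u : ℂ → ℂ) (hu : ∀ z, u z = (2 * k / A) * Complex.tan (k * z)) :
    ∀ z : ℂ, Complex.cos (k * z) ≠ 0 →
      deriv (deriv (deriv u)) z - A * u z * deriv (deriv u) z - A * (deriv u z) ^ 2 = 0 := by
  set c := 2 * k / A with hc
  set g := fun w : ℂ => Complex.tan (k * w) with hg
  set p := fun w : ℂ => c * k * (g w ^ 2 + 1) with hp
  set q := fun w : ℂ => 2 * c * k ^ 2 * (g w ^ 3 + g w) with hq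
  have hgd : ∀ w : ℂ, Complex.cos (k * w) ≠ 0 → HasDerivAt g (k * (g w ^ 2 + 1)) w := by
    intro w hw
    have h1 : HasDerivAt (fun x : ℂ => k * x) k w := by
      simpa using (hasDerivAt_id w).const_mul k
    have h2 := (Complex.hasDerivAt_tan hw).comp w h1
    have h3 : Complex.tan (k * w) ^ 2 + 1 = 1 / Complex.cos (k * w) ^ 2 := by
      rw [Complex.tan_eq_sin_div_cos]
      field_simp
      exact Complex.sin_sq_add_cos_sq _

    have : HasDerivAt g (1 / Complex.cos (k * w) ^ 2 * k) w := h2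
    convert this using 1
    rw [hg]
    simp only []
    rw [← h3]
    ring
  have hcont : Continuous fun x : ℂ => Complex.cos (k * x) :=
    Complex.continuous_cos.comp (continuous_const.mul continuous_id)
  have hev : ∀ w : ℂ, Complex.cos (k * w) ≠ 0 →
      ∀ᶠ x in nhds w, Complex.cos (k * x) ≠ 0 := fun w hw =>
    hcont.continuousAt.eventually_ne hw
  have hufun : u = fun x => c * g x := funext fun x => hu x
  have hud : ∀ w : ℂ, Complex.cos (k * w) ≠ 0 → HasDerivAt u (p w) w := by
    intro w hw
    rw [hufun]
    have := (hgd w hw).const_mul c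
    convert this using 1
    · rfl
    · rfl
    rw [hp]; ring
  have hpd : ∀ w : ℂ, Complex.cos (k * w) ≠ 0 → HasDerivAt p (q w) w := by
    intro w hw
    have := (((hgd w hw).pow 2).add_const 1).const_mul (c * k)
    convert this using 1
    · rfl
    · rfl
    · rfl
    rw [hq]; push_cast; ring
  have hqd : ∀ w : ℂ, Complex.cos (k * w) ≠ 0 →
      HasDerivAt q (2 * c * k ^ 3 * (3 * g w ^ 2 + 1) * (g w ^ 2 + 1)) w := by
    intro w hw
    have := (((hgd w hw).pow 3).add (hgd w hw)).const_mul (2 * c * k ^ 2)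
    convert this using 1
    · rfl
    · rfl
    · rfl
    push_cast; ring
  have hD1 : ∀ w : ℂ, Complex.cos (k * w) ≠ 0 → deriv u w = p w := fun w hw =>
    (hud w hw).deriv
  have hD2 : ∀ w : ℂ, Complex.cos (k * w) ≠ 0 → deriv (deriv u) w = q w := by
    intro w hw
    have he : deriv u =ᶠ[nhds w] p := (hev w hw).mono fun x hx => hD1 x hx
    rw [he.deriv_eq]
    exact (hpd w hw).deriv
  intro z hz
  have hD3 : deriv (deriv (deriv u)) z
      = 2 * c * k ^ 3 * (3 * g z ^ 2 + 1) * (g z ^ 2 + 1) := by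
    have he : deriv (deriv u) =ᶠ[nhds z] q := (hev z hz).mono fun x hx => hD2 x hx
    rw [he.deriv_eq]
    exact (hqd z hz).deriv
  rw [hD3, hD2 z hz, hD1 z hz, hu z]
  rw [hp, hq, hc]
  have : Complex.tan (k * z) = g z := rfl
  rw [this]
  field_simp
  ring
end

section
/- The function f(z) = √6 · tanh(z/√6) satisfies f''' + (1/3) f f'' + (1/3)(f')² = 0 at every real z. -/
open Real

lemma hasDerivAt_tanh' (x : ℝ) : HasDerivAt Real.tanh (1 - Real.tanh x ^ 2) x := by
  have hc : Real.cosh x ≠ 0 := (Real.cosh_pos x).ne'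
  have h : HasDerivAt (fun y => Real.sinh y / Real.cosh y)
      ((Real.cosh x * Real.cosh x - Real.sinh x * Real.sinh x) / Real.cosh x ^ 2) x :=
    (Real.hasDerivAt_sinh x).div (Real.hasDerivAt_cosh x) hc
  have heq : (fun y => Real.sinh y / Real.cosh y) = Real.tanh := by
    funext y; rw [Real.tanh_eq_sinh_div_cosh]
  rw [heq] at h
  convert h using 1
  rw [Real.tanh_eq_sinh_div_cosh]
  have := Real.cosh_sq_sub_sinh_sq x
  field_simp

theorem stmt11 (f : ℝ → ℝ)
    (hf : ∀ z, f z = Real.sqrt 6 * Real.tanh (z / Real.sqrt 6)) :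
    ∀ z : ℝ,
      deriv (deriv (deriv f)) z + (1 / 3) * f z * deriv (deriv f) z
        + (1 / 3) * (deriv f z) ^ 2 = 0 := by
  have hs : Real.sqrt 6 > 0 := Real.sqrt_pos.mpr (by norm_num)
  have hs2 : Real.sqrt 6 ^ 2 = 6 := Real.sq_sqrt (by norm_num)
  have hsne : Real.sqrt 6 ≠ 0 := hs.ne'
  set s := Real.sqrt 6 with hsdef
  -- t x := tanh (x/s)
  have hdiv : ∀ x : ℝ, HasDerivAt (fun y => y / s) (1 / s) x := fun x => by
    simpa using (hasDerivAt_id x).div_const s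
  have ht : ∀ x : ℝ, HasDerivAt (fun y => Real.tanh (y / s))
      ((1 - Real.tanh (x / s) ^ 2) * (1 / s)) x := fun x =>
    by have := (hasDerivAt_tanh' (x / s)).comp x (hdiv x); exact this
  have h1 : ∀ x : ℝ, HasDerivAt f (1 - Real.tanh (x / s) ^ 2) x := fun x => by
    have := ((ht x).const_mul s)
    have hfe : f = fun y => s * Real.tanh (y / s) := funext hf
    rw [hfe]
    refine this.congr_deriv ?_
    field_simp
  have hd1 : deriv f = fun x => 1 - Real.tanh (x / s) ^ 2 :=
    funext fun x => (h1 x).deriv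
  have h2 : ∀ x : ℝ, HasDerivAt (deriv f)
      (-2 * Real.tanh (x / s) * (1 - Real.tanh (x / s) ^ 2) / s) x := fun x => by
    rw [hd1]
    have := ((ht x).pow 2).const_sub 1
    refine this.congr_deriv ?_
    ring
  have hd2 : deriv (deriv f) = fun x => -2 * Real.tanh (x / s) * (1 - Real.tanh (x / s) ^ 2) / s :=
    funext fun x => (h2 x).deriv
  have h3 : ∀ x : ℝ, HasDerivAt (deriv (deriv f))
      (-2 * ((1 - Real.tanh (x / s) ^ 2) * (1 - 3 * Real.tanh (x / s) ^ 2)) / s ^ 2) x := fun x => by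
    rw [hd2]
    have hmul : HasDerivAt (fun y => -2 * Real.tanh (y / s) * (1 - Real.tanh (y / s) ^ 2))
        (-2 * ((1 - Real.tanh (x / s) ^ 2) * (1 / s)) * (1 - Real.tanh (x / s) ^ 2)
          + -2 * Real.tanh (x / s) * -(2 * Real.tanh (x / s) * ((1 - Real.tanh (x / s) ^ 2) * (1 / s)))) x := by
      have ha := (ht x).const_mul (-2 : ℝ)
      have hb := ((ht x).pow 2).const_sub 1
      have := ((ht x).const_mul (-2 : ℝ)).mul (((ht x).pow 2).const_sub 1)
      refine this.congr_deriv ?_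
      simp only [Pi.pow_apply]
      ring
    have := hmul.div_const s
    refine this.congr_deriv ?_
    field_simp
    ring
  intro z
  rw [(h3 z).deriv, (h2 z).deriv, (h1 z).deriv, hf z]
  obtain ⟨t, ht'⟩ : ∃ t, Real.tanh (z / s) = t := ⟨_, rfl⟩
  rw [ht']
  have h6 : s ^ 2 = 6 := hs2
  field_simp
  linear_combination (1 - t ^ 2) * (1 - 3 * t ^ 2) * h6
end

section
/- Let A, B, β, γ ∈ ℂ with A ≠ 0, B ≠ 0, and B/(A+B) ∉ ℤ \ {0} (in particular A + B ≠ 0). If a polynomial P(z) satisfies P''' − B P P'' − A(P')² + β P' + γ P + δ = 0 identically on ℂ, then deg P ≤ 2. -/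
/-!
Write the equation as a polynomial identity and look at the coefficient of `z ^ (2n - 2)`, where
`n = deg P ≥ 3` and `c` is the leading coefficient. Only `P P''` and `(P')²` reach that degree, so
the coefficient is `-(B n (n - 1) + A n²) c² = -n ((A + B) n - B) c²`. Its vanishing forces
`(A + B) n = B`, hence `A + B ≠ 0` and `B / (A + B) = n`, a nonzero integer.
-/

open Polynomial

section CommRing

variable {R : Type*} [CommRing R]

noncomputable def odeResidual (A B β γ δ : R) (P : R[X]) : R[X] :=
  derivative (derivative (derivative P)) - C B * (P * derivative (derivative P))
    - C A * derivative P ^ 2 + C β * derivative P + C γ * P + C δ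

theorem coeff_odeResidual_of_natDegree_le {A B β γ δ : R} {P : R[X]} {k : ℕ}
    (hP : P.natDegree ≤ k + 2) (hk : k ≠ 0) :
    (odeResidual A B β γ δ P).coeff (k + 2 + k) =
      -(B * (k + 2) * (k + 1) + A * (k + 2) ^ 2) * P.coeff (k + 2) ^ 2 := by
  have h1 : (derivative P).natDegree ≤ k + 1 := (natDegree_derivative_le P).trans (by omega)
  have h2 : (derivative (derivative P)).natDegree ≤ k :=
    (natDegree_derivative_le _).trans (by omega)
  have h3 : (derivative (derivative (derivative P))).natDegree < k + 2 + k :=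
    (natDegree_derivative_le _).trans_lt (by omega)
  have hmul : (P * derivative (derivative P)).coeff (k + 2 + k) =
      P.coeff (k + 2) * (P.coeff (k + 2) * (k + 2) * (k + 1)) := by
    rw [coeff_mul_add_eq_of_natDegree_le hP h2, coeff_derivative, coeff_derivative]
    push_cast
    ring
  have hsq : (derivative P ^ 2).coeff (k + 2 + k) = (P.coeff (k + 2) * (k + 2)) ^ 2 := by
    rw [show k + 2 + k = 2 * (k + 1) by omega, coeff_pow_of_natDegree_le h1, coeff_derivative]
    push_cast
    ring
  have hP' : (derivative P).coeff (k + 2 + k) = 0 := coeff_eq_zero_of_natDegree_lt (by omega)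
  have hP0 : P.coeff (k + 2 + k) = 0 := coeff_eq_zero_of_natDegree_lt (by omega)
  simp only [odeResidual, coeff_add, coeff_sub, coeff_C_mul, coeff_C, hmul, hsq, hP', hP0,
    coeff_eq_zero_of_natDegree_lt h3, if_neg (show k + 2 + k ≠ 0 by omega)]
  ring

theorem add_mul_natDegree_eq_of_odeResidual_eq_zero [IsDomain R] [CharZero R]
    {A B β γ δ : R} {P : R[X]} (h : odeResidual A B β γ δ P = 0) (hP : 3 ≤ P.natDegree) :
    (A + B) * P.natDegree = B := by
  obtain ⟨k, hk⟩ : ∃ k, P.natDegree = k + 2 := ⟨P.natDegree - 2, by omega⟩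
  have hc : P.coeff (k + 2) ≠ 0 := by
    rw [← hk]
    exact leadingCoeff_ne_zero.mpr (ne_zero_of_natDegree_gt hP)
  have hk2 : (k + 2 : R) ≠ 0 := by exact_mod_cast (k + 1).succ_ne_zero
  have htop := congrArg (coeff · (k + 2 + k)) h
  simp only [coeff_odeResidual_of_natDegree_le hk.le (by omega : k ≠ 0), coeff_zero] at htop
  have hfactor : (k + 2 : R) * ((A + B) * (k + 2) - B) * P.coeff (k + 2) ^ 2 = 0 := by
    linear_combination -htop
  have hroot : (A + B) * (k + 2) - B = 0 := by simpa [hk2, hc] using hfactor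
  rw [hk]
  push_cast
  linear_combination hroot

end CommRing

theorem eval_odeResidual {𝕜 : Type*} [NontriviallyNormedField 𝕜] (A B β γ δ : 𝕜) (P : 𝕜[X])
    (z : 𝕜) : (odeResidual A B β γ δ P).eval z =
      deriv (deriv (deriv fun w => P.eval w)) z
        - B * P.eval z * deriv (deriv fun w => P.eval w) z
        - A * (deriv (fun w => P.eval w) z) ^ 2
        + β * deriv (fun w => P.eval w) z + γ * P.eval z + δ := by
  have hderiv (Q : 𝕜[X]) : (deriv fun w => Q.eval w) = fun w => (derivative Q).eval w :=
    funext fun _ => Q.deriv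
  simp only [hderiv, odeResidual, eval_add, eval_sub, eval_mul, eval_pow, eval_C]
  ring

theorem stmt16_general (A B β γ δ : ℂ) (hB : B ≠ 0)
    (hgen : ¬∃ m : ℤ, m ≠ 0 ∧ B / (A + B) = (m : ℂ))
    (P : Polynomial ℂ)
    (hode : ∀ z : ℂ,
      deriv (deriv (deriv fun w => P.eval w)) z
        - B * P.eval z * deriv (deriv fun w => P.eval w) z
        - A * (deriv (fun w => P.eval w) z) ^ 2
        + β * deriv (fun w => P.eval w) z + γ * P.eval z + δ = 0) :
    P.natDegree ≤ 2 := by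
  by_contra! hP
  have hres : odeResidual A B β γ δ P = 0 :=
    Polynomial.funext fun z => by rw [eval_odeResidual, hode, eval_zero]
  have hn := add_mul_natDegree_eq_of_odeResidual_eq_zero hres hP
  have hAB : A + B ≠ 0 := fun h => hB (by rw [← hn, h, zero_mul])
  exact hgen ⟨P.natDegree, by exact_mod_cast (by omega : P.natDegree ≠ 0),
    by rw [div_eq_iff hAB]; push_cast; linear_combination -hn⟩

theorem stmt16 (A B β γ δ : ℂ) (hA : A ≠ 0) (hB : B ≠ 0)
    (hgen : ¬∃ m : ℤ, m ≠ 0 ∧ B / (A + B) = (m : ℂ))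
    (P : Polynomial ℂ)
    (hode : ∀ z : ℂ,
      deriv (deriv (deriv fun w => P.eval w)) z
        - B * P.eval z * deriv (deriv fun w => P.eval w) z
        - A * (deriv (fun w => P.eval w) z) ^ 2
        + β * deriv (fun w => P.eval w) z + γ * P.eval z + δ = 0) :
    P.natDegree ≤ 2 :=
  stmt16_general A B β γ δ hB hgen P hode
end
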